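/- (Lemma, lower bound on joints) There is a constant C_n > 0 depending only on n with the following property: let L be a finite set of lines in ℝ^n, J its set of joints, and J' ⊆ J a subset such that every line ℓ ∈ L with ℓ ∩ J' ≠ ∅ satisfies |ℓ ∩ J'| ≥ m. If J' is nonempty, then |J'| ≥ C_n · m^n. -/

import Mathlib

/-! If `#J < (k + 1) ^ n`, counting monomials gives a nonzero polynomial `P` of degree at most
`n * k < m` vanishing on `J`. On a line of `L` through `x ∈ J`, `P` has degree `< m` but at least
`m` zeros, so it vanishes on the whole line and its derivative at `x` along the line is zero. At a
joint these `n` directions span `ℝⁿ`, so `∇P` vanishes on `J`. The partial derivatives of `P`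
therefore satisfy the same hypotheses with smaller degree, and induction on the degree shows that
`P` is a constant vanishing on `J ≠ ∅`, a contradiction. With `k = (m - 1) / n` this gives
`#J ≥ (m / n) ^ n`. -/

open MvPolynomial

/-- A line in ℝⁿ, given by a base point and a nonzero direction vector. -/
structure Line (n : ℕ) where
  p : Fin n → ℝ
  v : Fin n → ℝ
  hv : v ≠ 0

/-- The set of points of a line. -/
def Line.carrier {n : ℕ} (ℓ : Line n) : Set (Fin n → ℝ) :=
  {x | ∃ t : ℝ, x = ℓ.p + t • ℓ.v}

/-- `x` is a joint of the collection of lines `L`: it lies on `n` lines of `L`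
whose directions are linearly independent. -/
def IsJoint {n : ℕ} (L : Finset (Line n)) (x : Fin n → ℝ) : Prop :=
  ∃ f : Fin n → Line n, (∀ i, f i ∈ L) ∧ (∀ i, x ∈ (f i).carrier) ∧
    LinearIndependent ℝ (fun i => (f i).v)

/-- The set of joints of `L`. -/
def joints {n : ℕ} (L : Finset (Line n)) : Set (Fin n → ℝ) :=
  {x | IsJoint L x}

namespace MvPolynomial

variable {R σ : Type*}

theorem totalDegree_pderiv_lt [CommSemiring R] {p : MvPolynomial σ R} {i : σ}
    (h : pderiv i p ≠ 0) : (pderiv i p).totalDegree < p.totalDegree := by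
  have key : ∀ d ∈ (pderiv i p).support, (d.sum fun _ e => e) < p.totalDegree := by
    intro d hd
    have hcoeff : coeff (d + Finsupp.single i 1) p ≠ 0 := by
      intro h0
      rw [mem_support_iff, coeff_pderiv, h0, zero_mul] at hd
      exact hd rfl
    have := le_totalDegree (mem_support_iff.mpr hcoeff)
    rw [Finsupp.sum_add_index' (fun _ => rfl) (fun _ _ _ => rfl),
      Finsupp.sum_single_index rfl] at this
    omega
  obtain ⟨d, hd, hmax⟩ := Finset.exists_mem_eq_sup _ (support_nonempty.mpr h)
    fun d : σ →₀ ℕ => d.sum fun _ e => e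
  rw [totalDegree, hmax]
  exact key d hd

theorem eq_C_of_forall_pderiv_eq_zero [CommRing R] [IsDomain R] [CharZero R]
    {p : MvPolynomial σ R} (h : ∀ i, pderiv i p = 0) : p = C (coeff 0 p) := by
  classical
  ext d
  rw [coeff_C]
  split_ifs with hd
  · rw [hd]
  obtain ⟨i, hi⟩ : ∃ i, d i ≠ 0 := by
    by_contra! hall
    exact hd (Finsupp.ext fun i => (hall i).symm)
  have hle : Finsupp.single i 1 ≤ d := Finsupp.single_le_iff.mpr (Nat.one_le_iff_ne_zero.mpr hi)
  have := coeff_pderiv (i := i) p (d - Finsupp.single i 1)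
  rw [h i, coeff_zero, tsub_add_cancel_of_le hle, eq_comm] at this
  exact (mul_eq_zero.mp this).resolve_right (Nat.cast_add_one_ne_zero _)

open Polynomial in
theorem derivative_aeval [CommSemiring R] [Fintype σ] (γ : σ → R[X]) (p : MvPolynomial σ R) :
    derivative (aeval γ p) = ∑ i, aeval γ (pderiv i p) * derivative (γ i) := by
  classical
  induction p using MvPolynomial.induction_on with
  | C a => simp
  | add p q hp hq => simp [hp, hq, add_mul, Finset.sum_add_distrib]
  | mul_X p j hp =>
    simp only [map_mul, aeval_X, derivative_mul, hp, Derivation.leibniz, pderiv_X, smul_eq_mul,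
      map_add, add_mul, Finset.sum_add_distrib, Finset.sum_mul, Pi.single_apply]
    simp [mul_right_comm, mul_comm (γ j), add_comm]

open Polynomial in
theorem natDegree_aeval_le_totalDegree [CommSemiring R] {γ : σ → R[X]}
    (hγ : ∀ i, (γ i).natDegree ≤ 1) (p : MvPolynomial σ R) :
    (aeval γ p).natDegree ≤ p.totalDegree := by
  classical
  conv_lhs => rw [p.as_sum, map_sum]
  refine Polynomial.natDegree_sum_le_of_forall_le _ _ fun d hd => ?_
  rw [aeval_monomial]
  refine (natDegree_C_mul_le _ _).trans (le_trans ?_ (le_totalDegree hd))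
  refine (natDegree_prod_le _ _).trans (Finset.sum_le_sum fun i _ => ?_)
  exact natDegree_pow_le.trans (mul_le_of_le_one_right' (hγ i))

theorem exists_mem_ne_zero_eval_eq_zero_of_card_lt_finrank {K : Type*} [Field K]
    (V : Submodule K (MvPolynomial σ K)) [FiniteDimensional K V] (S : Finset (σ → K))
    (hS : S.card < Module.finrank K V) : ∃ p ∈ V, p ≠ 0 ∧ ∀ x ∈ S, eval x p = 0 := by
  let evalOn : V →ₗ[K] (S → K) :=
    LinearMap.pi fun x : S => (aeval x.1).toLinearMap ∘ₗ V.subtype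
  have hker : LinearMap.ker evalOn ≠ ⊥ :=
    LinearMap.ker_ne_bot_of_finrank_lt (by simpa using hS)
  obtain ⟨⟨p, hpV⟩, hp, hp0⟩ := (Submodule.ne_bot_iff _).mp hker
  refine ⟨p, hpV, fun h => hp0 (by simp [h]), fun x hx => ?_⟩
  simpa [evalOn] using congrFun (LinearMap.mem_ker.mp hp) ⟨x, hx⟩

theorem exists_ne_zero_totalDegree_le_eval_eq_zero {K : Type*} [Field K] [Fintype σ]
    (S : Finset (σ → K)) (k : ℕ) (hS : S.card < (k + 1) ^ Fintype.card σ) :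
    ∃ p : MvPolynomial σ K, p ≠ 0 ∧ p.totalDegree ≤ Fintype.card σ * k ∧
      ∀ x ∈ S, eval x p = 0 := by
  classical
  let exponent : (σ → Fin (k + 1)) → σ →₀ ℕ := fun e => Finsupp.equivFunOnFinite.symm (e ·)
  have hexponent : Function.Injective exponent := fun e e' h => by
    ext i; simpa [exponent] using DFunLike.congr_fun h i
  let b := fun e => monomial (exponent e) (1 : K)
  have hb : LinearIndependent K b :=
    (basisMonomials σ K).linearIndependent.comp exponent hexponent
  have hspan : Submodule.span K (Set.range b) ≤ restrictTotalDegree σ K (Fintype.card σ * k) := by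
    refine Submodule.span_le.mpr ?_
    rintro _ ⟨e, rfl⟩
    refine (mem_restrictTotalDegree _ _ _).mpr ((totalDegree_monomial_le _ _).trans ?_)
    rw [Finsupp.sum_fintype _ _ fun _ => rfl]
    simpa [exponent] using
      Finset.sum_le_card_nsmul Finset.univ _ k fun i _ => Nat.lt_succ_iff.mp (e i).2
  have : FiniteDimensional K (Submodule.span K (Set.range b)) :=
    FiniteDimensional.span_of_finite K (Set.finite_range b)
  obtain ⟨p, hp, hp0, hpS⟩ := exists_mem_ne_zero_eval_eq_zero_of_card_lt_finrank
    (Submodule.span K (Set.range b)) S (by simpa [finrank_span_eq_card hb] using hS)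
  exact ⟨p, hp0, (mem_restrictTotalDegree _ _ _).mp (hspan hp), hpS⟩

open Polynomial in
noncomputable def restrictLine [CommSemiring R] (x v : σ → R) : MvPolynomial σ R →ₐ[R] R[X] :=
  aeval fun i => Polynomial.C (v i) * Polynomial.X + Polynomial.C (x i)

section restrictLine

variable [CommSemiring R] (x v : σ → R) (p : MvPolynomial σ R)

theorem eval_restrictLine (t : R) : (restrictLine x v p).eval t = eval (x + t • v) p := by
  rw [← Polynomial.coe_aeval_eq_eval, restrictLine, comp_aeval_apply, ← coe_aeval_eq_eval]
  have hγ : (fun i => Polynomial.aeval t (Polynomial.C (v i) * Polynomial.X + Polynomial.C (x i)))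
      = x + t • v := by
    ext i
    simp only [map_add, map_mul, Polynomial.aeval_C, Polynomial.aeval_X, Pi.add_apply,
      Pi.smul_apply, smul_eq_mul, Algebra.algebraMap_self, RingHom.id_apply]
    ring
  rw [hγ]
  rfl

theorem natDegree_restrictLine_le : (restrictLine x v p).natDegree ≤ p.totalDegree :=
  natDegree_aeval_le_totalDegree (fun _ => Polynomial.natDegree_linear_le) p

theorem eval_derivative_restrictLine_zero [Fintype σ] :
    (Polynomial.derivative (restrictLine x v p)).eval 0 = v ⬝ᵥ fun i => eval x (pderiv i p) := by
  rw [restrictLine, derivative_aeval, Polynomial.eval_finsetSum, dotProduct]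
  refine Finset.sum_congr rfl fun i _ => ?_
  rw [Polynomial.eval_mul, ← restrictLine, eval_restrictLine]
  simp only [zero_smul, add_zero, Polynomial.derivative_add, Polynomial.derivative_C_mul_X,
    Polynomial.derivative_C, Polynomial.eval_C]
  ring

end restrictLine

theorem dotProduct_eval_pderiv_eq_zero_of_totalDegree_lt [CommRing R] [IsDomain R] [Fintype σ]
    {x v : σ → R} {p : MvPolynomial σ R} (T : Finset R) (hT : ∀ t ∈ T, eval (x + t • v) p = 0)
    (hdeg : p.totalDegree < T.card) : v ⬝ᵥ (fun i => eval x (pderiv i p)) = 0 := by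
  have hline : restrictLine x v p = 0 :=
    Polynomial.eq_zero_of_natDegree_lt_card_of_eval_eq_zero' _ T
      (fun t ht => (eval_restrictLine x v p t).trans (hT t ht))
      ((natDegree_restrictLine_le x v p).trans_lt hdeg)
  rw [← eval_derivative_restrictLine_zero, hline, Polynomial.derivative_zero, Polynomial.eval_zero]

end MvPolynomial

theorem LinearIndependent.eq_zero_of_forall_dotProduct_eq_zero {ι K : Type*} [Fintype ι]
    [DecidableEq ι] [Field K] {v : ι → ι → K} (hv : LinearIndependent K v) {w : ι → K}
    (h : ∀ k, v k ⬝ᵥ w = 0) : w = 0 :=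
  Matrix.mulVec_injective_iff_isUnit.mpr (Matrix.linearIndependent_rows_iff_isUnit.mp hv)
    (by ext k; simpa [Matrix.mulVec] using h k)

namespace Line

variable {n : ℕ} (ℓ : Line n) {x : Fin n → ℝ}

theorem carrier_eq_range (hx : x ∈ ℓ.carrier) :
    ℓ.carrier = Set.range fun t : ℝ => x + t • ℓ.v := by
  obtain ⟨a, rfl⟩ := hx
  ext y
  constructor
  · rintro ⟨b, rfl⟩
    exact ⟨b - a, by simp only [sub_smul]; abel⟩
  · rintro ⟨b, rfl⟩
    exact ⟨a + b, by simp only [add_smul, add_assoc]⟩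

theorem injective_add_smul (x : Fin n → ℝ) : Function.Injective fun t : ℝ => x + t • ℓ.v :=
  (add_right_injective x).comp (smul_left_injective ℝ ℓ.hv)

theorem exists_finset_params_card_eq_ncard_inter (J : Finset (Fin n → ℝ)) (hx : x ∈ ℓ.carrier) :
    ∃ T : Finset ℝ, T.card = ((J : Set (Fin n → ℝ)) ∩ ℓ.carrier).ncard ∧
      ∀ t ∈ T, x + t • ℓ.v ∈ J := by
  have hfin : ((fun t : ℝ => x + t • ℓ.v) ⁻¹' ((J : Set (Fin n → ℝ)) ∩ ℓ.carrier)).Finite :=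
    (J.finite_toSet.inter_of_left _).preimage (ℓ.injective_add_smul x).injOn
  refine ⟨hfin.toFinset, ?_, fun t ht => ((hfin.mem_toFinset).mp ht).1⟩
  rw [← Set.ncard_eq_toFinset_card _ hfin, Set.ncard_preimage_of_injective_subset_range
    (ℓ.injective_add_smul x) (ℓ.carrier_eq_range hx ▸ Set.inter_subset_right)]

end Line

section Joints

variable {n : ℕ} {L : Finset (Line n)} {J : Finset (Fin n → ℝ)} {m : ℕ}

theorem eval_pderiv_eq_zero_of_isJoint
    (hm : ∀ ℓ ∈ L, ((J : Set (Fin n → ℝ)) ∩ ℓ.carrier).Nonempty →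
      m ≤ ((J : Set (Fin n → ℝ)) ∩ ℓ.carrier).ncard)
    {p : MvPolynomial (Fin n) ℝ} (hdeg : p.totalDegree < m) (hp : ∀ y ∈ J, eval y p = 0)
    {x : Fin n → ℝ} (hxJ : x ∈ J) (hx : IsJoint L x) : (fun i => eval x (pderiv i p)) = 0 := by
  obtain ⟨f, hfL, hxf, hf⟩ := hx
  refine hf.eq_zero_of_forall_dotProduct_eq_zero fun k => ?_
  obtain ⟨T, hT, hTJ⟩ := (f k).exists_finset_params_card_eq_ncard_inter J (hxf k)
  exact dotProduct_eval_pderiv_eq_zero_of_totalDegree_lt T (fun t ht => hp _ (hTJ t ht))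
    (hdeg.trans_le (hT ▸ hm _ (hfL k) ⟨x, hxJ, hxf k⟩))

theorem eq_zero_of_totalDegree_lt_of_eval_eq_zero (hJ : ∀ x ∈ J, IsJoint L x)
    (hm : ∀ ℓ ∈ L, ((J : Set (Fin n → ℝ)) ∩ ℓ.carrier).Nonempty →
      m ≤ ((J : Set (Fin n → ℝ)) ∩ ℓ.carrier).ncard)
    (hne : J.Nonempty) {p : MvPolynomial (Fin n) ℝ} (hdeg : p.totalDegree < m)
    (hp : ∀ x ∈ J, eval x p = 0) : p = 0 := by
  induction hd : p.totalDegree using Nat.strong_induction_on generalizing p with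
  | _ d ih =>
  have hpderiv : ∀ i, pderiv i p = 0 := fun i => by
    by_contra hi
    have hlt := totalDegree_pderiv_lt hi
    exact hi (ih _ (hd ▸ hlt) (hlt.trans hdeg)
      (fun x hx => congrFun (eval_pderiv_eq_zero_of_isJoint hm hdeg hp hx (hJ x hx)) i) rfl)
  obtain ⟨x, hx⟩ := hne
  rw [eq_C_of_forall_pderiv_eq_zero hpderiv] at hp ⊢
  simpa using hp x hx

theorem pow_le_card_of_mul_lt (hJ : ∀ x ∈ J, IsJoint L x)
    (hm : ∀ ℓ ∈ L, ((J : Set (Fin n → ℝ)) ∩ ℓ.carrier).Nonempty →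
      m ≤ ((J : Set (Fin n → ℝ)) ∩ ℓ.carrier).ncard)
    (hne : J.Nonempty) {k : ℕ} (hk : n * k < m) : (k + 1) ^ n ≤ J.card := by
  by_contra! h
  obtain ⟨p, hp0, hdeg, hp⟩ :=
    exists_ne_zero_totalDegree_le_eval_eq_zero J k (by simpa using h)
  exact hp0 (eq_zero_of_totalDegree_lt_of_eval_eq_zero hJ hm hne
    (hdeg.trans_lt (by simpa using hk)) hp)

end Joints

theorem stmt_7_general (n : ℕ) :
    ∃ C : ℝ, 0 < C ∧
      ∀ (L : Finset (Line n)) (J' : Finset (Fin n → ℝ)) (m : ℕ),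
        (∀ x ∈ J', IsJoint L x) →
        (∀ ℓ ∈ L, ((J' : Set (Fin n → ℝ)) ∩ ℓ.carrier).Nonempty →
          m ≤ ((J' : Set (Fin n → ℝ)) ∩ ℓ.carrier).ncard) →
        J'.Nonempty →
        C * (m : ℝ) ^ n ≤ (J'.card : ℝ) := by
  refine ⟨1 / (n : ℝ) ^ n, one_div_pos.mpr (by exact_mod_cast Nat.pow_self_pos),
    fun L J m hJ hm hne => ?_⟩
  obtain ⟨k, hk⟩ : ∃ k, k = (m - 1) / n := ⟨_, rfl⟩
  have hcard : (k + 1) ^ n ≤ J.card := by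
    rcases Nat.eq_zero_or_pos m with rfl | hm0
    · simpa [hk] using hne.card_pos
    · exact pow_le_card_of_mul_lt hJ hm hne (hk ▸ (Nat.mul_div_le _ _).trans_lt (by omega))
  have hmk : (m : ℝ) / n ≤ k + 1 := by
    rcases Nat.eq_zero_or_pos n with rfl | hn
    · rw [Nat.cast_zero, div_zero]
      positivity
    · rw [div_le_iff₀' (by positivity)]
      exact_mod_cast (by have := hk ▸ Nat.lt_mul_div_succ (m - 1) hn; omega : m ≤ n * (k + 1))
  calc 1 / (n : ℝ) ^ n * (m : ℝ) ^ n = ((m : ℝ) / n) ^ n := by rw [div_pow]; ring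
    _ ≤ ((k + 1 : ℕ) : ℝ) ^ n := by push_cast; exact pow_le_pow_left₀ (by positivity) hmk n
    _ ≤ J.card := by exact_mod_cast hcard

theorem stmt_7 (n : ℕ) (hn : 2 ≤ n) :
    ∃ C : ℝ, 0 < C ∧
      ∀ (L : Finset (Line n)) (J' : Finset (Fin n → ℝ)) (m : ℕ),
        (∀ x ∈ J', IsJoint L x) →
        (∀ ℓ ∈ L, ((J' : Set (Fin n → ℝ)) ∩ ℓ.carrier).Nonempty →
          m ≤ ((J' : Set (Fin n → ℝ)) ∩ ℓ.carrier).ncard) →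
        J'.Nonempty →
        C * (m : ℝ) ^ n ≤ (J'.card : ℝ) :=
  stmt_7_general n
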